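/- Let π_ref and π_stu be fully supported probability distributions on a finite set Y, and for λ ∈ [0,1] let π_λ(y) ∝ π_ref(y)^{1−λ}·π_stu(y)^{λ}. Then the expected log-likelihood gap E_{y∼π_λ}[log π_ref(y) − log π_stu(y)] is nonincreasing in λ on [0,1]. -/

import Mathlib

open Real Finset

/-!
Writing `g = log πref - log πstu`, the geometric mixture is `π_λ ∝ πref · exp (-λ g)`, so the
expected gap is the mean of `g` under an exponential tilt of `πref`. Raising `λ` by `t ≥ 0`
multiplies the weights by `exp (-t g)`, which is antivarying with `g`, and a weighted Chebyshev
sum inequality shows that reweighting by such a factor can only lower the mean of `g`.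
-/

theorem AntivaryOn.sum_weight_mul_sum_le_sum_mul_sum {ι : Type*} {s : Finset ι} {w f g : ι → ℝ}
    (hw : ∀ i ∈ s, 0 ≤ w i) (hfg : AntivaryOn f g s) :
    (∑ i ∈ s, w i) * ∑ i ∈ s, w i * (f i * g i) ≤
      (∑ i ∈ s, w i * f i) * ∑ i ∈ s, w i * g i := by
  have hdouble : ∑ i ∈ s, ∑ j ∈ s, w i * w j * ((f j - f i) * (g j - g i)) =
      2 * ((∑ i ∈ s, w i) * ∑ i ∈ s, w i * (f i * g i) -
        (∑ i ∈ s, w i * f i) * ∑ i ∈ s, w i * g i) := by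
    have expand : ∀ i j, w i * w j * ((f j - f i) * (g j - g i)) =
        w i * (w j * (f j * g j)) + w j * (w i * (f i * g i))
          - (w i * f i) * (w j * g j) - (w j * f j) * (w i * g i) := fun i j => by ring
    simp only [expand, sum_add_distrib, sum_sub_distrib, ← mul_sum, ← sum_mul]
    ring
  have hnonpos : ∑ i ∈ s, ∑ j ∈ s, w i * w j * ((f j - f i) * (g j - g i)) ≤ 0 :=
    sum_nonpos fun i hi => sum_nonpos fun j hj =>
      mul_nonpos_of_nonneg_of_nonpos (mul_nonneg (hw i hi) (hw j hj))
        (hfg.sub_mul_sub_nonpos hi hj)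
  linarith

section TiltedMean

variable {ι : Type*} [Fintype ι]

noncomputable def tiltedMean (w g : ι → ℝ) (t : ℝ) : ℝ :=
  (∑ i, w i * exp (-t * g i) * g i) / ∑ i, w i * exp (-t * g i)

theorem antitone_tiltedMean [Nonempty ι] {w : ι → ℝ} (hw : ∀ i, 0 < w i) (g : ι → ℝ) :
    Antitone (tiltedMean w g) := by
  intro a b hab
  -- Tilting by `b` is tilting the `a`-tilted weights `v` further by `h = exp (-(b - a) g)`.
  set v : ι → ℝ := fun i => w i * exp (-a * g i)
  set h : ι → ℝ := fun i => exp (-(b - a) * g i)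
  have hvh : ∀ i, w i * exp (-b * g i) = v i * h i := fun i => by
    simp only [v, h, mul_assoc, ← exp_add]; ring_nf
  have hv : ∀ i, 0 < v i := fun i => mul_pos (hw i) (exp_pos _)
  have hgh : AntivaryOn g h (univ : Finset ι) := by
    intro i _ j _ hij
    by_contra! hg
    exact hij.not_ge (exp_le_exp.2 (by nlinarith [sub_nonneg.2 hab]))
  have hcheb := hgh.sum_weight_mul_sum_le_sum_mul_sum fun i _ => (hv i).le
  have key : (∑ i, v i * h i * g i) / ∑ i, v i * h i ≤ (∑ i, v i * g i) / ∑ i, v i := by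
    rw [div_le_div_iff₀ (sum_pos (fun i _ => mul_pos (hv i) (exp_pos _)) univ_nonempty)
      (sum_pos (fun i _ => hv i) univ_nonempty)]
    calc (∑ i, v i * h i * g i) * ∑ i, v i
        = (∑ i, v i) * ∑ i, v i * (g i * h i) := by simp only [mul_comm (g _), mul_assoc]; ring
      _ ≤ (∑ i, v i * g i) * ∑ i, v i * h i := hcheb
  simp only [tiltedMean, hvh]
  exact key

end TiltedMean

theorem rpow_one_sub_mul_rpow_eq_mul_exp {p q : ℝ} (hp : 0 < p) (hq : 0 < q) (t : ℝ) :
    p ^ (1 - t) * q ^ t = p * exp (-t * (log p - log q)) := by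
  rw [rpow_def_of_pos hp, rpow_def_of_pos hq, ← exp_add, ← exp_log hp, ← exp_add, log_exp]
  ring_nf

theorem stmt_14_general {Y : Type*} [Fintype Y] [Nonempty Y]
    (πref πstu : Y → ℝ)
    (href0 : ∀ y, 0 < πref y)
    (hstu0 : ∀ y, 0 < πstu y)
    (πt : ℝ → Y → ℝ)
    (hπt : ∀ lam y, πt lam y = (πref y) ^ (1 - lam) * (πstu y) ^ lam
        / ∑ y', (πref y') ^ (1 - lam) * (πstu y') ^ lam) :
    AntitoneOn (fun lam : ℝ =>
        ∑ y, πt lam y * (Real.log (πref y) - Real.log (πstu y)))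
      (Set.Icc 0 1) := by
  have hmean : (fun lam : ℝ => ∑ y, πt lam y * (log (πref y) - log (πstu y))) =
      tiltedMean πref (fun y => log (πref y) - log (πstu y)) := by
    ext lam
    simp only [hπt, rpow_one_sub_mul_rpow_eq_mul_exp (href0 _) (hstu0 _), tiltedMean, sum_div,
      div_mul_eq_mul_div]
  rw [hmean]
  exact (antitone_tiltedMean href0 _).antitoneOn _

/-- Along the geometric-mixture path from teacher to student, the expected
log-likelihood gap is nonincreasing in the mixture weight `λ ∈ [0,1]`. -/
theorem stmt_14 {Y : Type*} [Fintype Y] [Nonempty Y]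
    (πref πstu : Y → ℝ)
    (href0 : ∀ y, 0 < πref y) (href1 : ∑ y, πref y = 1)
    (hstu0 : ∀ y, 0 < πstu y) (hstu1 : ∑ y, πstu y = 1)
    (πt : ℝ → Y → ℝ)
    (hπt : ∀ lam y, πt lam y = (πref y) ^ (1 - lam) * (πstu y) ^ lam
        / ∑ y', (πref y') ^ (1 - lam) * (πstu y') ^ lam) :
    AntitoneOn (fun lam : ℝ =>
        ∑ y, πt lam y * (Real.log (πref y) - Real.log (πstu y)))
      (Set.Icc 0 1) :=
  stmt_14_general πref πstu href0 hstu0 πt hπt
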